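/- arXiv:2504.20737 — 8 statements merged into one kernel-verified Lean document; each statement's English description precedes it below -/
import Mathlib

section
/- For every a ∈ ℝⁿ and every K, K' ∈ 𝔎, one has |j_K(a) − j_{K'}(a)| ≤ d_H(K,K')·|a| / (r_min(K)·r_min(K')). -/
/-!
If `K` lies in the closed `δ`-neighbourhood of `K'` and `B(0, r') ⊆ K'`, then by convexity
`K ⊆ K' + (δ / r') • K' = (1 + δ / r') • K'`, hence `j_{K'} ≤ (1 + δ / r') j_K`. Together with
`j_K(a) ≤ |a| / r` for `B(0, r) ⊆ K` this gives `j_{K'}(a) - j_K(a) ≤ δ |a| / (r r')`; take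
`δ = d_H(K, K')`, `r, r'` the inradii, and swap `K` and `K'`.
-/

open MeasureTheory Metric Set

noncomputable section

abbrev Evec (n : ℕ) := EuclideanSpace ℝ (Fin n)

/-- `K` is a compact convex set containing `0` in its interior. -/
def IsConvexBody {n : ℕ} (K : Set (Evec n)) : Prop :=
  IsCompact K ∧ Convex ℝ K ∧ 0 ∈ interior K

def rMin {n : ℕ} (K : Set (Evec n)) : ℝ := sSup {R : ℝ | 0 ≤ R ∧ closedBall 0 R ⊆ K}

open Pointwise

theorem subset_cthickening_hausdorffDist {α : Type*} [PseudoMetricSpace α] {s t : Set α}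
    (hfin : hausdorffEDist s t ≠ ⊤) : s ⊆ cthickening (hausdorffDist s t) t := fun _ hx => by
  rw [mem_cthickening_iff, hausdorffDist, ENNReal.ofReal_toReal hfin]
  exact infEDist_le_hausdorffEDist_of_mem hx

theorem subset_add_closedBall_hausdorffDist {E : Type*} [SeminormedAddCommGroup E] {K K' : Set E}
    (hK' : IsCompact K') (hfin : hausdorffEDist K K' ≠ ⊤) :
    K ⊆ K' + closedBall 0 (hausdorffDist K K') := by
  rw [hK'.add_closedBall_zero hausdorffDist_nonneg]
  exact subset_cthickening_hausdorffDist hfin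

section NormedSpace

variable {E : Type*} [NormedAddCommGroup E] [NormedSpace ℝ E] {K K' : Set E} {r r' δ : ℝ}

theorem bddAbove_radii_of_isBounded [Nontrivial E] (hK : Bornology.IsBounded K) :
    BddAbove {R : ℝ | 0 ≤ R ∧ closedBall (0 : E) R ⊆ K} := by
  obtain ⟨M, hM⟩ := hK.subset_closedBall 0
  refine ⟨M, fun R ⟨hR, hball⟩ => ?_⟩
  obtain ⟨x, hx⟩ := exists_norm_eq E hR
  simpa [hx] using hM (hball (mem_closedBall_zero_iff.2 hx.le))

theorem gauge_le_norm_div_of_closedBall_subset (hr : 0 < r) (hK : closedBall 0 r ⊆ K) (x : E) :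
    gauge K x ≤ ‖x‖ / r := by
  rw [← gauge_closedBall hr.le]
  exact gauge_mono ((absorbent_ball_zero hr).mono ball_subset_closedBall) hK x

theorem add_closedBall_subset_smul_of_closedBall_subset (hK : Convex ℝ K) (hr : 0 < r)
    (hball : closedBall 0 r ⊆ K) (hδ : 0 ≤ δ) :
    K + closedBall 0 δ ⊆ (1 + δ / r) • K := by
  have hδball : closedBall (0 : E) δ = (δ / r) • closedBall 0 r := by
    rw [_root_.smul_closedBall _ _ hr.le, smul_zero, Real.norm_of_nonneg (by positivity),
      div_mul_cancel₀ _ hr.ne']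
  rw [hK.add_smul zero_le_one (by positivity), one_smul, hδball]
  exact add_subset_add_left (smul_set_mono hball)

theorem gauge_le_mul_gauge_of_subset_smul {c : ℝ} (hK : Absorbent ℝ K) (hc : 0 < c)
    (h : K ⊆ c • K') (x : E) : gauge K' x ≤ c * gauge K x := by
  have hmono := gauge_mono hK h x
  rw [gauge_smul_left_of_nonneg hc.le, Pi.smul_apply, smul_eq_mul] at hmono
  rwa [← inv_mul_le_iff₀ hc]

theorem gauge_sub_gauge_le_of_subset_add_closedBall (hK' : Convex ℝ K') (hr : 0 < r)
    (hr' : 0 < r') (hball : closedBall 0 r ⊆ K) (hball' : closedBall 0 r' ⊆ K') (hδ : 0 ≤ δ)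
    (hKK' : K ⊆ K' + closedBall 0 δ) (x : E) :
    gauge K' x - gauge K x ≤ δ * ‖x‖ / (r * r') := by
  have hK : Absorbent ℝ K :=
    absorbent_nhds_zero (Filter.mem_of_superset (closedBall_mem_nhds 0 hr) hball)
  have hscale := gauge_le_mul_gauge_of_subset_smul hK (by positivity)
    (hKK'.trans (add_closedBall_subset_smul_of_closedBall_subset hK' hr' hball' hδ)) x
  have hgauge := gauge_le_norm_div_of_closedBall_subset hr hball x
  calc gauge K' x - gauge K x ≤ δ / r' * gauge K x := by linarith
    _ ≤ δ / r' * (‖x‖ / r) := by gcongr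
    _ = δ * ‖x‖ / (r * r') := by ring

end NormedSpace

section rMin

variable {n : ℕ} {K K' : Set (Evec n)}

-- For `n = 0` every radius qualifies, and `sSup` of the unbounded set of radii is `0`.
theorem rMin_pos (hn : n ≠ 0) (hK : Bornology.IsBounded K) (h0 : 0 ∈ interior K) :
    0 < rMin K := by
  have : NeZero n := ⟨hn⟩
  obtain ⟨ε, hε, hball⟩ := Metric.isOpen_iff.1 isOpen_interior 0 h0
  refine (half_pos hε).trans_le
    (le_csSup (bddAbove_radii_of_isBounded hK) ⟨by positivity, ?_⟩)
  exact (closedBall_subset_ball (half_lt_self hε)).trans (hball.trans interior_subset)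

theorem closedBall_rMin_subset (hn : n ≠ 0) (hK : IsCompact K) (h0 : 0 ∈ interior K) :
    closedBall 0 (rMin K) ⊆ K := by
  rw [← closure_ball 0 (rMin_pos hn hK.isBounded h0).ne']
  refine closure_minimal (fun x hx => ?_) hK.isClosed
  have h0mem : (0 : ℝ) ∈ {R : ℝ | 0 ≤ R ∧ closedBall (0 : Evec n) R ⊆ K} :=
    ⟨le_rfl, by simpa using interior_subset h0⟩
  obtain ⟨R, hR, hxR⟩ := exists_lt_of_lt_csSup ⟨0, h0mem⟩ (mem_ball_zero_iff.1 hx)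
  exact hR.2 (mem_closedBall_zero_iff.2 hxR.le)

theorem gauge_sub_gauge_le_hausdorffDist (hn : n ≠ 0) (hK : IsConvexBody K)
    (hK' : IsConvexBody K') (a : Evec n) :
    gauge K' a - gauge K a ≤ hausdorffDist K K' * ‖a‖ / (rMin K * rMin K') := by
  obtain ⟨hKc, -, hK0⟩ := hK
  obtain ⟨hKc', hKconv', hK0'⟩ := hK'
  have hfin : hausdorffEDist K K' ≠ ⊤ := hausdorffEDist_ne_top_of_nonempty_of_bounded
    ⟨0, interior_subset hK0⟩ ⟨0, interior_subset hK0'⟩ hKc.isBounded hKc'.isBounded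
  exact gauge_sub_gauge_le_of_subset_add_closedBall hKconv' (rMin_pos hn hKc.isBounded hK0)
    (rMin_pos hn hKc'.isBounded hK0') (closedBall_rMin_subset hn hKc hK0)
    (closedBall_rMin_subset hn hKc' hK0') hausdorffDist_nonneg
    (subset_add_closedBall_hausdorffDist hKc' hfin) a

end rMin

/-- Lipschitz estimate for the gauge with respect to the Hausdorff distance. -/
theorem gauge_lipschitz_hausdorff {n : ℕ} (hn : 2 ≤ n)
    (a : Evec n) (K K' : Set (Evec n)) (hK : IsConvexBody K) (hK' : IsConvexBody K') :
    |gauge K a - gauge K' a| ≤ hausdorffDist K K' * ‖a‖ / (rMin K * rMin K') := by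
  have hn0 : n ≠ 0 := by omega
  rw [abs_sub_le_iff, hausdorffDist_comm, mul_comm (rMin K)]
  refine ⟨gauge_sub_gauge_le_hausdorffDist hn0 hK' hK a, ?_⟩
  rw [hausdorffDist_comm, mul_comm (rMin K')]
  exact gauge_sub_gauge_le_hausdorffDist hn0 hK hK' a
end
end

section
/- Every uniformly convex K ∈ 𝔎 is properly convex: for every x in the topological boundary ∂K of K, there exist y ∈ ℝⁿ and R ≥ 0 such that K ⊆ B(y,R) and |x − y| = R. -/
/-!
Take a functional `f` supporting `K` at the boundary point `x`; then `f ≤ f x · gauge K`.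
Uniform convexity applied to `x` and `z ∈ K` pushes the gauge of their midpoint below `1` by an
amount quadratic in `‖x - z‖`, and evaluating `f` at the midpoint turns this into the gap
`f x - f z ≥ δ ‖x - z‖²`. Writing `f = ⟪w, ·⟫`, that gap says exactly that `K` lies in the ball
centred at `x - (2δ)⁻¹ • w` whose boundary passes through `x`.
-/

open MeasureTheory Metric Set
open scoped Topology RealInnerProductSpace

noncomputable section

/-- `c`-uniform convexity of the squared gauge. -/
def UnifConvexGauge {n : ℕ} (K : Set (Evec n)) (c : ℝ) : Prop :=
  ∀ x y : Evec n,
    2 * gauge K x ^ 2 + c * gauge K y ^ 2 ≤ gauge K (x + y) ^ 2 + gauge K (x - y) ^ 2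

theorem Convex.exists_pos_supporting_functional {E : Type*} [NormedAddCommGroup E]
    [NormedSpace ℝ E] {K : Set E} (hK : Convex ℝ K) (h0 : 0 ∈ interior K) {x : E}
    (hx : x ∉ interior K) : ∃ f : StrongDual ℝ E, 0 < f x ∧ ∀ z ∈ K, f z ≤ f x := by
  obtain ⟨f, hf⟩ := geometric_hahn_banach_open_point hK.interior isOpen_interior hx
  refine ⟨f, by simpa using hf 0 h0, fun z hz => ?_⟩
  have hKcl : K ⊆ closure (interior K) := by
    rw [hK.closure_interior_eq_closure_of_nonempty_interior ⟨0, h0⟩]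
    exact subset_closure
  exact closure_minimal (fun a ha => (hf a ha).le) (isClosed_Iic.preimage f.continuous) (hKcl hz)

theorem le_mul_gauge_of_forall_le {E F : Type*} [AddCommGroup E] [Module ℝ E] [FunLike F E ℝ]
    [LinearMapClass F ℝ E ℝ] {K : Set E} (hK : Absorbent ℝ K) {f : F} {p : ℝ} (hp : 0 < p)
    (hf : ∀ z ∈ K, f z ≤ p) (v : E) : f v ≤ p * gauge K v := by
  rw [← div_le_iff₀' hp, gauge_def]
  refine le_csInf hK.gauge_set_nonempty ?_
  rintro r ⟨hr, w, hw, rfl⟩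
  rw [map_smul, smul_eq_mul, div_le_iff₀' hp, mul_comm]
  exact mul_le_mul_of_nonneg_right (hf w hw) hr.le

theorem exists_subset_closedBall_dist_of_quadratic_support {E : Type*}
    [NormedAddCommGroup E] [InnerProductSpace ℝ E] [CompleteSpace E] {K : Set E}
    {f : StrongDual ℝ E} {x : E} {δ : ℝ} (hδ : 0 < δ)
    (h : ∀ z ∈ K, δ * ‖x - z‖ ^ 2 ≤ f x - f z) : ∃ y, K ⊆ closedBall y (dist x y) := by
  set w := (InnerProductSpace.toDual ℝ E).symm f
  refine ⟨x - (2 * δ)⁻¹ • w, fun z hz => ?_⟩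
  rw [mem_closedBall, dist_eq_norm, dist_eq_norm, sub_sub_cancel]
  have hinner : ⟪z - x, w⟫ = f z - f x := by
    rw [real_inner_comm, InnerProductSpace.toDual_symm_apply, map_sub]
  have hsq : ‖z - (x - (2 * δ)⁻¹ • w)‖ ^ 2 ≤ ‖(2 * δ)⁻¹ • w‖ ^ 2 := by
    rw [show z - (x - (2 * δ)⁻¹ • w) = (z - x) + (2 * δ)⁻¹ • w by abel, norm_add_sq_real,
      real_inner_smul_right, hinner, norm_sub_rev]
    have hscaled : (2 * δ)⁻¹ * (f z - f x) ≤ -(‖x - z‖ ^ 2 / 2) := by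
      rw [inv_mul_le_iff₀ (by positivity)]
      linarith [h z hz]
    linarith
  exact pow_le_pow_iff_left₀ (norm_nonneg _) (norm_nonneg _) two_ne_zero |>.mp hsq

namespace UnifConvexGauge

variable {n : ℕ} {K : Set (Evec n)} {c : ℝ}

theorem midpoint_sq_le (huc : UnifConvexGauge K c) (x z : Evec n) :
    2 * gauge K ((2⁻¹ : ℝ) • (x + z)) ^ 2 + c / 4 * gauge K (x - z) ^ 2 ≤
      gauge K x ^ 2 + gauge K z ^ 2 := by
  have h := huc ((2⁻¹ : ℝ) • (x + z)) ((2⁻¹ : ℝ) • (x - z))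
  rw [show (2⁻¹ : ℝ) • (x + z) + (2⁻¹ : ℝ) • (x - z) = x by module,
    show (2⁻¹ : ℝ) • (x + z) - (2⁻¹ : ℝ) • (x - z) = z by module,
    gauge_smul_of_nonneg (x := x - z) (by norm_num : (0 : ℝ) ≤ 2⁻¹), smul_eq_mul] at h
  linarith

theorem mul_min_le_sub {F : Type*} [FunLike F (Evec n) ℝ] [LinearMapClass F ℝ (Evec n) ℝ]
    (huc : UnifConvexGauge K c) {f : F} {x z : Evec n} (hp : 0 < f x)
    (hf : ∀ v, f v ≤ f x * gauge K v) (hx : gauge K x ≤ 1) (hz : gauge K z ≤ 1) :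
    f x * min (c / 8 * gauge K (x - z) ^ 2) 2 ≤ f x - f z := by
  set m : Evec n := (2⁻¹ : ℝ) • (x + z)
  have hfm : f m = (f x + f z) / 2 := by
    simp only [m, map_smul, map_add, smul_eq_mul]
    ring
  rcases lt_or_ge (f m) 0 with hneg | hnonneg
  · calc f x * min (c / 8 * gauge K (x - z) ^ 2) 2 ≤ f x * 2 := by
          gcongr; exact min_le_right _ _
      _ ≤ f x - f z := by linarith
  · have hfz : f z ≤ f x := (hf z).trans (mul_le_of_le_one_right hp.le hz)
    have hgm : gauge K m ^ 2 ≤ 1 - c / 8 * gauge K (x - z) ^ 2 := by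
      have hmid : 2 * gauge K m ^ 2 + c / 4 * gauge K (x - z) ^ 2 ≤
          gauge K x ^ 2 + gauge K z ^ 2 := huc.midpoint_sq_le x z
      linarith [pow_le_one₀ (n := 2) (gauge_nonneg x) hx, pow_le_one₀ (n := 2) (gauge_nonneg z) hz]
    have hfm_sq : f m ^ 2 ≤ f x ^ 2 * gauge K m ^ 2 := by
      rw [← mul_pow]
      exact pow_le_pow_left₀ hnonneg (hf m) 2
    have key : f x * (f x * (c / 8 * gauge K (x - z) ^ 2)) ≤ f x * (f x - f z) :=
      calc f x * (f x * (c / 8 * gauge K (x - z) ^ 2)) ≤ f x ^ 2 - f m ^ 2 := by nlinarith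
        _ = (f x - f m) * (f x + f m) := by ring
        _ ≤ f x * (f x - f z) := by nlinarith
    calc f x * min (c / 8 * gauge K (x - z) ^ 2) 2
        ≤ f x * (c / 8 * gauge K (x - z) ^ 2) := by gcongr; exact min_le_left _ _
      _ ≤ f x - f z := le_of_mul_le_mul_left key hp

theorem exists_quadratic_support {F : Type*} [FunLike F (Evec n) ℝ]
    [LinearMapClass F ℝ (Evec n) ℝ] (huc : UnifConvexGauge K c) (hc : 0 < c)
    (hKb : Bornology.IsBounded K) (hK0 : K ∈ 𝓝 0) {f : F} {x : Evec n} (hx : x ∈ K)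
    (hp : 0 < f x) (hf : ∀ z ∈ K, f z ≤ f x) :
    ∃ δ > 0, ∀ z ∈ K, δ * ‖x - z‖ ^ 2 ≤ f x - f z := by
  obtain ⟨M, hM, hKM⟩ := hKb.subset_closedBall_lt 0 0
  have habs : Absorbent ℝ K := absorbent_nhds_zero hK0
  refine ⟨f x * min (c / (8 * M ^ 2)) (1 / (2 * M ^ 2)), by positivity, fun z hz => ?_⟩
  refine le_trans ?_ (huc.mul_min_le_sub hp (le_mul_gauge_of_forall_le habs hp hf)
    (gauge_le_one_of_mem hx) (gauge_le_one_of_mem hz))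
  rw [mul_assoc, min_mul_of_nonneg _ _ (sq_nonneg _)]
  gcongr f x * ?_
  apply min_le_min
  · have hgauge : ‖x - z‖ / M ≤ gauge K (x - z) := le_gauge_of_subset_closedBall habs hM.le hKM
    calc c / (8 * M ^ 2) * ‖x - z‖ ^ 2 = c / 8 * (‖x - z‖ / M) ^ 2 := by field_simp
      _ ≤ c / 8 * gauge K (x - z) ^ 2 := by gcongr
  · have hdiam : ‖x - z‖ ≤ 2 * M := by
      have hxM := mem_closedBall_zero_iff.mp (hKM hx)
      have hzM := mem_closedBall_zero_iff.mp (hKM hz)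
      linarith [norm_sub_le x z]
    calc 1 / (2 * M ^ 2) * ‖x - z‖ ^ 2 ≤ 1 / (2 * M ^ 2) * (2 * M) ^ 2 := by gcongr
      _ = 2 := by field_simp

end UnifConvexGauge

theorem uniformly_convex_properly_convex_general {n : ℕ}
    (K : Set (Evec n)) (hK : IsConvexBody K)
    (hu : ∃ c > (0:ℝ), UnifConvexGauge K c) :
    ∀ x ∈ frontier K, ∃ (y : Evec n) (R : ℝ), 0 ≤ R ∧ K ⊆ closedBall y R ∧ ‖x - y‖ = R := by
  obtain ⟨c, hc, huc⟩ := hu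
  obtain ⟨hKcomp, hKconv, h0⟩ := hK
  intro x hx
  obtain ⟨f, hp, hf⟩ := hKconv.exists_pos_supporting_functional h0 hx.2
  obtain ⟨δ, hδ, hsep⟩ := huc.exists_quadratic_support hc hKcomp.isBounded
    (mem_interior_iff_mem_nhds.mp h0) (hKcomp.isClosed.frontier_subset hx) hp hf
  obtain ⟨y, hy⟩ := exists_subset_closedBall_dist_of_quadratic_support hδ hsep
  exact ⟨y, ‖x - y‖, norm_nonneg _, by rwa [← dist_eq_norm], rfl⟩

/-- A uniformly convex body is properly convex: every boundary point lies on a sphere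
enclosing `K`. -/
theorem uniformly_convex_properly_convex {n : ℕ} (hn : 2 ≤ n)
    (K : Set (Evec n)) (hK : IsConvexBody K)
    (hu : ∃ c > (0:ℝ), UnifConvexGauge K c) :
    ∀ x ∈ frontier K, ∃ (y : Evec n) (R : ℝ), 0 ≤ R ∧ K ⊆ closedBall y R ∧ ‖x - y‖ = R :=
  uniformly_convex_properly_convex_general K hK hu
end
end

section
/- Let e ∈ ℝⁿ with |e| = 1 and let r₂ ≥ r₁ ≥ 0. Set K = B(r₁·e, r₂) ∩ B(−r₁·e, r₂). Then a_K = r₂² − r₁². -/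
open MeasureTheory Metric Set

noncomputable section

/-- `a_K = inf {R² − |ū|² : K ⊆ B(ū,R), R > 0}`. -/
def aConst {n : ℕ} (K : Set (Evec n)) : ℝ :=
  sInf {s : ℝ | ∃ (u : Evec n) (R : ℝ), 0 < R ∧ K ⊆ closedBall u R ∧ s = R ^ 2 - ‖u‖ ^ 2}

/-!
Every ball `B(u, R)` containing the lens `K = B(c, r) ∩ B(-c, r)` contains the rim point `x`
of `K` with `x ⊥ c`, `|x|² = r² - |c|²` and `⟪x, u⟫ ≤ 0` (such a point exists once the dimension
is at least two), so `R² ≥ |x - u|² ≥ |x|² + |u|²`, i.e. `R² - |u|² ≥ r² - |c|²`. The balls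
`B(c, R)` with `R > r` contain `K` and bring `R² - |c|²` arbitrarily close to this bound.
-/

open Module RealInnerProductSpace

section InnerProductSpace

variable {E : Type*} [NormedAddCommGroup E] [InnerProductSpace ℝ E]

lemma norm_sq_add_norm_sq_le_norm_sub_sq {x u : E} (h : ⟪x, u⟫ ≤ 0) :
    ‖x‖ ^ 2 + ‖u‖ ^ 2 ≤ ‖x - u‖ ^ 2 := by
  rw [norm_sub_sq_real]
  linarith

lemma mem_closedBall_of_inner_eq_zero {x c : E} {r : ℝ} (hr : 0 ≤ r) (hxc : ⟪x, c⟫ = 0)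
    (h : ‖x‖ ^ 2 + ‖c‖ ^ 2 ≤ r ^ 2) : x ∈ closedBall c r := by
  rw [mem_closedBall, dist_eq_norm, ← pow_le_pow_iff_left₀ (norm_nonneg _) hr two_ne_zero,
    norm_sub_sq_real, hxc]
  linarith

lemma exists_norm_eq_inner_eq_zero_inner_nonpos [FiniteDimensional ℝ E]
    (hE : 2 ≤ finrank ℝ E) (c u : E) {ρ : ℝ} (hρ : 0 ≤ ρ) :
    ∃ x : E, ‖x‖ = ρ ∧ ⟪x, c⟫ = 0 ∧ ⟪x, u⟫ ≤ 0 := by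
  have hspan : finrank ℝ (ℝ ∙ c) ≤ 1 := (finrank_span_le_card {c}).trans (by simp)
  have hsum := (ℝ ∙ c).finrank_add_finrank_orthogonal
  have : Nontrivial (ℝ ∙ c)ᗮ := finrank_pos_iff (R := ℝ) |>.mp (by omega)
  obtain ⟨⟨y, hy⟩, hyρ⟩ := exists_norm_eq (ℝ ∙ c)ᗮ hρ
  have hyc : ⟪y, c⟫ = 0 := Submodule.mem_orthogonal_singleton_iff_inner_left.mp hy
  rcases le_total ⟪y, u⟫ 0 with hyu | hyu
  · exact ⟨y, hyρ, hyc, hyu⟩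
  · refine ⟨-y, by rwa [norm_neg], by rw [inner_neg_left, hyc, neg_zero], ?_⟩
    rw [inner_neg_left]
    exact neg_nonpos.mpr hyu

lemma sq_sub_norm_sq_le_of_closedBall_inter_subset [FiniteDimensional ℝ E]
    (hE : 2 ≤ finrank ℝ E) {c u : E} {r R : ℝ} (hc : ‖c‖ ≤ r)
    (hsub : closedBall c r ∩ closedBall (-c) r ⊆ closedBall u R) :
    r ^ 2 - ‖c‖ ^ 2 ≤ R ^ 2 - ‖u‖ ^ 2 := by
  have hr : 0 ≤ r := (norm_nonneg c).trans hc
  obtain ⟨x, hxρ, hxc, hxu⟩ :=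
    exists_norm_eq_inner_eq_zero_inner_nonpos hE c u (Real.sqrt_nonneg (r ^ 2 - ‖c‖ ^ 2))
  have hx : ‖x‖ ^ 2 = r ^ 2 - ‖c‖ ^ 2 := by
    rw [hxρ, Real.sq_sqrt (sub_nonneg.mpr (pow_le_pow_left₀ (norm_nonneg c) hc 2))]
  have hxK : x ∈ closedBall c r ∩ closedBall (-c) r :=
    ⟨mem_closedBall_of_inner_eq_zero hr hxc (by linarith),
      mem_closedBall_of_inner_eq_zero hr (by rw [inner_neg_right, hxc, neg_zero])
        (by rw [norm_neg]; linarith)⟩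
  have hxuR : ‖x - u‖ ^ 2 ≤ R ^ 2 := by
    have := hsub hxK
    rw [mem_closedBall, dist_eq_norm] at this
    exact pow_le_pow_left₀ (norm_nonneg _) this 2
  linarith [norm_sq_add_norm_sq_le_norm_sub_sq hxu]

end InnerProductSpace

theorem aConst_closedBall_inter_neg {n : ℕ} (hn : 2 ≤ n) (c : Evec n) {r : ℝ} (hc : ‖c‖ ≤ r) :
    aConst (closedBall c r ∩ closedBall (-c) r) = r ^ 2 - ‖c‖ ^ 2 := by
  have hE : 2 ≤ finrank ℝ (Evec n) := by rwa [finrank_euclideanSpace_fin]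
  have hr : 0 ≤ r := (norm_nonneg c).trans hc
  have hlower : ∀ s ∈ {s : ℝ | ∃ (u : Evec n) (R : ℝ), 0 < R ∧
      closedBall c r ∩ closedBall (-c) r ⊆ closedBall u R ∧ s = R ^ 2 - ‖u‖ ^ 2},
      r ^ 2 - ‖c‖ ^ 2 ≤ s := by
    rintro s ⟨u, R, -, hsub, rfl⟩
    exact sq_sub_norm_sq_le_of_closedBall_inter_subset hE hc hsub
  have hcover : ∀ R, r ≤ R → closedBall c r ∩ closedBall (-c) r ⊆ closedBall c R :=
    fun R hR => inter_subset_left.trans (closedBall_subset_closedBall hR)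
  apply le_antisymm
  · refine le_of_forall_gt_imp_ge_of_dense fun t ht => ?_
    have hR : r < √(t + ‖c‖ ^ 2) := (Real.lt_sqrt hr).mpr (by linarith)
    refine csInf_le ⟨_, hlower⟩ ⟨c, _, hr.trans_lt hR, hcover _ hR.le, ?_⟩
    rw [Real.sq_sqrt (by nlinarith [sq_nonneg ‖c‖]), add_sub_cancel_right]
  · exact le_csInf ⟨_, c, r + 1, by linarith, hcover _ (by linarith), rfl⟩ hlower

/-- Value of `a_K` for the intersection of two balls `B(r₁e, r₂) ∩ B(−r₁e, r₂)`. -/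
theorem aConst_ball_inter {n : ℕ} (hn : 2 ≤ n)
    (e : Evec n) (he : ‖e‖ = 1) (r₁ r₂ : ℝ) (hr₁ : 0 ≤ r₁) (hr₁₂ : r₁ ≤ r₂) :
    aConst (closedBall (r₁ • e) r₂ ∩ closedBall (-(r₁ • e)) r₂) = r₂ ^ 2 - r₁ ^ 2 := by
  have hnorm : ‖r₁ • e‖ = r₁ := by rw [norm_smul, he, mul_one, Real.norm_of_nonneg hr₁]
  rw [aConst_closedBall_inter_neg hn (r₁ • e) (hnorm.trans_le hr₁₂), hnorm]
end
end

section
/- Let e ∈ ℝⁿ with |e| = 1, a ≥ 0, R = √(1 + a²), and K = B(−a·e, R) ∩ B(a·e, R). Then K ∈ 𝔎, K is (R−a)²-uniformly convex, and the function f(x) = j_K(x)² satisfies f((x+y)/2) ≤ (f(x) + f(y))/2 − |x−y|²/8 for all x, y ∈ ℝⁿ. -/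
open MeasureTheory Metric Set

noncomputable section

open scoped RealInnerProductSpace

/-!
Put `w = a • e`, so that `R² = 1 + ‖w‖²`. Then `‖z ∓ w‖ ≤ R` iff `‖z‖² ≤ 1 ± 2⟪w, z⟫`, i.e. iff
`√(⟪w, z⟫² + ‖z‖²) ≤ 1 ± ⟪w, z⟫`, so `K` is the closed unit ball of the norm
`G z = |⟪w, z⟫| + √(⟪w, z⟫² + ‖z‖²)`, and `G` is the gauge of `K`.
Since `G² = ‖z‖² + 2 |⟪w, z⟫| G` and both `|⟪w, ·⟫|` and `G` are convex, the midpoint defect of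
`G²` is at least that of `‖·‖²`, namely `‖x - y‖² / 4`, plus
`(|⟪w, x⟫| - |⟪w, y⟫|) (G x - G y) / 2 ≥ -‖x - y‖² / 8`.
Uniform convexity follows by applying the midpoint inequality to `x ± y`, together with
`G ≤ (R + ‖w‖) ‖·‖ = ‖·‖ / (R - ‖w‖)`.
-/

theorem Seminorm.gauge_closedBall {E : Type*} [AddCommGroup E] [Module ℝ E]
    (p : Seminorm ℝ E) : gauge (p.closedBall 0 1) = p := by
  refine le_antisymm ?_ ?_
  · rw [← p.gauge_ball]
    exact gauge_mono (p.absorbent_ball_zero one_pos) (p.ball_subset_closedBall 0 1)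
  · intro x
    refine le_csInf (p.absorbent_closedBall_zero one_pos).gauge_set_nonempty ?_
    rintro r ⟨hr, y, hy, hyx⟩
    rw [p.mem_closedBall_zero] at hy
    rw [← hyx, map_smul_eq_mul, Real.norm_eq_abs, abs_of_pos hr]
    exact mul_le_of_le_one_right hr.le hy

theorem neg_abs_mul_abs_le_sub_mul_sqrt_sub {p q : ℝ} (hp : 0 ≤ p) (hq : 0 ≤ q) (X Y : ℝ) :
    -(|p - q| * |X - Y|) ≤ (p - q) * (√(p ^ 2 + X ^ 2) - √(q ^ 2 + Y ^ 2)) := by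
  set s := √(p ^ 2 + X ^ 2)
  set r := √(q ^ 2 + Y ^ 2)
  have hs : s ^ 2 = p ^ 2 + X ^ 2 := Real.sq_sqrt (by positivity)
  have hr : r ^ 2 = q ^ 2 + Y ^ 2 := Real.sq_sqrt (by positivity)
  have hXY : |X + Y| ≤ s + r :=
    (abs_add_le X Y).trans (add_le_add (Real.abs_le_sqrt (by nlinarith))
      (Real.abs_le_sqrt (by nlinarith)))
  -- `(s - r) (s + r) = (p - q) (p + q) + (X - Y) (X + Y)` removes the square roots
  have hmul : 0 ≤ ((p - q) * (s - r) + |p - q| * |X - Y|) * (s + r) := by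
    have hcross : -(|p - q| * |X - Y| * (s + r)) ≤ (p - q) * (X - Y) * (X + Y) := by
      calc -(|p - q| * |X - Y| * (s + r)) ≤ -(|p - q| * |X - Y| * |X + Y|) := by
            gcongr
        _ = -|(p - q) * (X - Y) * (X + Y)| := by rw [abs_mul, abs_mul]
        _ ≤ (p - q) * (X - Y) * (X + Y) := neg_abs_le _
    nlinarith [mul_nonneg (sq_nonneg (p - q)) (add_nonneg hp hq)]
  have hs₀ : 0 ≤ s := Real.sqrt_nonneg _
  have hr₀ : 0 ≤ r := Real.sqrt_nonneg _
  rcases (add_nonneg hs₀ hr₀).eq_or_lt with h | h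
  · have hs0 : s = 0 := by linarith
    have hr0 : r = 0 := by linarith
    rw [hs0, hr0, sub_zero, mul_zero, neg_nonpos]
    positivity
  · linarith [nonneg_of_mul_nonneg_left hmul h]

theorem two_mul_add_mul_le_of_midpoint_le {F : Type*} [SeminormedAddCommGroup F]
    [NormedSpace ℝ F] {f : F → ℝ} {c : ℝ}
    (hmid : ∀ x y, f ((2 : ℝ)⁻¹ • (x + y)) ≤ (f x + f y) / 2 - ‖x - y‖ ^ 2 / 8)
    (hc : ∀ y, c * f y ≤ ‖y‖ ^ 2) (x y : F) :
    2 * f x + c * f y ≤ f (x + y) + f (x - y) := by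
  have h := hmid (x + y) (x - y)
  rw [show (2 : ℝ)⁻¹ • (x + y + (x - y)) = x by module,
    show x + y - (x - y) = (2 : ℝ) • y by module, norm_smul, Real.norm_two] at h
  linarith [hc y]

section Lens

variable {E : Type*} [NormedAddCommGroup E] [InnerProductSpace ℝ E]

-- `z ↦ ‖(⟪w, z⟫, z)‖` in `ℝ × E` with the `L²` norm, so that subadditivity comes for free
def lensSeminorm (w : E) : Seminorm ℝ E :=
  (normSeminorm ℝ ℝ).comp (innerₗ E w) +
    (normSeminorm ℝ (WithLp 2 (ℝ × E))).comp
      ((WithLp.linearEquiv 2 ℝ (ℝ × E)).symm.toLinearMap ∘ₗ (innerₗ E w).prod LinearMap.id)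

theorem lensSeminorm_apply (w z : E) :
    lensSeminorm w z = |⟪w, z⟫| + √(⟪w, z⟫ ^ 2 + ‖z‖ ^ 2) := by
  simp [lensSeminorm, WithLp.prod_norm_eq_of_L2]

theorem norm_sub_le_sqrt_one_add_sq_iff (w z : E) :
    ‖z - w‖ ≤ √(1 + ‖w‖ ^ 2) ↔ √(⟪w, z⟫ ^ 2 + ‖z‖ ^ 2) ≤ 1 + ⟪w, z⟫ := by
  have hsq : ‖z - w‖ ^ 2 = ‖z‖ ^ 2 - 2 * ⟪w, z⟫ + ‖w‖ ^ 2 := by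
    rw [norm_sub_sq_real, real_inner_comm]
  rw [Real.le_sqrt (norm_nonneg _) (by positivity), Real.sqrt_le_iff, hsq]
  constructor
  · intro h
    constructor <;> nlinarith [sq_nonneg ‖z‖, sq_nonneg (⟪w, z⟫ + 1)]
  · rintro ⟨-, h⟩
    nlinarith

theorem closedBall_inter_closedBall_eq_lensSeminorm_closedBall (w : E) :
    closedBall (-w) √(1 + ‖w‖ ^ 2) ∩ closedBall w √(1 + ‖w‖ ^ 2) =
      (lensSeminorm w).closedBall 0 1 := by
  ext z
  have hneg := norm_sub_le_sqrt_one_add_sq_iff (-w) z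
  rw [norm_neg, inner_neg_left, neg_sq] at hneg
  rw [mem_inter_iff, mem_closedBall_iff_norm, mem_closedBall_iff_norm, hneg,
    norm_sub_le_sqrt_one_add_sq_iff, Seminorm.mem_closedBall_zero, lensSeminorm_apply]
  constructor
  · rintro ⟨h₁, h₂⟩
    cases abs_cases ⟪w, z⟫ <;> linarith
  · intro h
    constructor <;> linarith [le_abs_self ⟪w, z⟫, neg_abs_le ⟪w, z⟫]

theorem gauge_closedBall_inter_closedBall (w : E) :
    gauge (closedBall (-w) √(1 + ‖w‖ ^ 2) ∩ closedBall w √(1 + ‖w‖ ^ 2)) = lensSeminorm w := by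
  rw [closedBall_inter_closedBall_eq_lensSeminorm_closedBall, Seminorm.gauge_closedBall]

theorem lensSeminorm_sq (w z : E) :
    lensSeminorm w z ^ 2 = ‖z‖ ^ 2 + 2 * |⟪w, z⟫| * lensSeminorm w z := by
  have hs := Real.sq_sqrt (by positivity : 0 ≤ ⟪w, z⟫ ^ 2 + ‖z‖ ^ 2)
  rw [lensSeminorm_apply]
  nlinarith [sq_abs ⟪w, z⟫]

theorem lensSeminorm_le (w z : E) :
    lensSeminorm w z ≤ (‖w‖ + √(1 + ‖w‖ ^ 2)) * ‖z‖ := by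
  have ht := abs_real_inner_le_norm w z
  have hs : √(⟪w, z⟫ ^ 2 + ‖z‖ ^ 2) ≤ √(1 + ‖w‖ ^ 2) * ‖z‖ := by
    rw [Real.sqrt_le_iff, mul_pow, Real.sq_sqrt (by positivity)]
    exact ⟨by positivity, by nlinarith [sq_abs ⟪w, z⟫, abs_nonneg ⟪w, z⟫]⟩
  rw [lensSeminorm_apply]
  linarith

theorem neg_norm_sub_sq_div_four_le_mul_lensSeminorm_sub (w x y : E) :
    -(‖x - y‖ ^ 2 / 4) ≤
      (|⟪w, x⟫| - |⟪w, y⟫|) * (lensSeminorm w x - lensSeminorm w y) := by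
  have hsqrt := neg_abs_mul_abs_le_sub_mul_sqrt_sub (abs_nonneg ⟪w, x⟫) (abs_nonneg ⟪w, y⟫)
    ‖x‖ ‖y‖
  have hv : |‖x‖ - ‖y‖| ≤ ‖x - y‖ := abs_norm_sub_norm_le x y
  simp only [sq_abs] at hsqrt
  rw [lensSeminorm_apply, lensSeminorm_apply]
  nlinarith [abs_nonneg (|⟪w, x⟫| - |⟪w, y⟫|), sq_abs (|⟪w, x⟫| - |⟪w, y⟫|),
    sq_nonneg (|(|⟪w, x⟫| - |⟪w, y⟫|)| - ‖x - y‖ / 2)]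

theorem lensSeminorm_sq_midpoint_le (w x y : E) :
    lensSeminorm w ((2 : ℝ)⁻¹ • (x + y)) ^ 2 ≤
      (lensSeminorm w x ^ 2 + lensSeminorm w y ^ 2) / 2 - ‖x - y‖ ^ 2 / 8 := by
  set m := (2 : ℝ)⁻¹ • (x + y)
  have hinner : |⟪w, m⟫| ≤ (|⟪w, x⟫| + |⟪w, y⟫|) / 2 := by
    rw [inner_smul_right, inner_add_right, abs_mul, abs_of_pos (by norm_num : (0 : ℝ) < 2⁻¹)]
    linarith [abs_add_le ⟪w, x⟫ ⟪w, y⟫]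
  have hG : lensSeminorm w m ≤ (lensSeminorm w x + lensSeminorm w y) / 2 := by
    rw [map_smul_eq_mul, Real.norm_eq_abs, abs_of_pos (by norm_num : (0 : ℝ) < 2⁻¹)]
    linarith [map_add_le_add (lensSeminorm w) x y]
  have hnorm : ‖m‖ ^ 2 = (‖x‖ ^ 2 + ‖y‖ ^ 2) / 2 - ‖x - y‖ ^ 2 / 4 := by
    rw [norm_smul, mul_pow, Real.norm_eq_abs, abs_of_pos (by norm_num : (0 : ℝ) < 2⁻¹)]
    linarith [parallelogram_law_with_norm ℝ x y]
  have hprod : |⟪w, m⟫| * lensSeminorm w m ≤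
      (|⟪w, x⟫| + |⟪w, y⟫|) / 2 * ((lensSeminorm w x + lensSeminorm w y) / 2) :=
    mul_le_mul hinner hG (apply_nonneg _ _) (by positivity)
  rw [lensSeminorm_sq, lensSeminorm_sq w x, lensSeminorm_sq w y, hnorm]
  nlinarith [neg_norm_sub_sq_div_four_le_mul_lensSeminorm_sub w x y]

theorem sq_sub_mul_lensSeminorm_sq_le (w y : E) :
    (√(1 + ‖w‖ ^ 2) - ‖w‖) ^ 2 * lensSeminorm w y ^ 2 ≤ ‖y‖ ^ 2 := by
  set R := √(1 + ‖w‖ ^ 2)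
  have hR : R ^ 2 = 1 + ‖w‖ ^ 2 := Real.sq_sqrt (by positivity)
  have hwR : ‖w‖ ≤ R := Real.le_sqrt_of_sq_le (by linarith)
  -- `(R - ‖w‖) (R + ‖w‖) = 1`
  have h : (R - ‖w‖) * lensSeminorm w y ≤ ‖y‖ := by
    calc (R - ‖w‖) * lensSeminorm w y ≤ (R - ‖w‖) * ((‖w‖ + R) * ‖y‖) :=
          mul_le_mul_of_nonneg_left (lensSeminorm_le w y) (by linarith)
      _ = ‖y‖ := by linear_combination ‖y‖ * hR
  rw [← mul_pow]
  exact pow_le_pow_left₀ (mul_nonneg (by linarith) (apply_nonneg _ _)) h 2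

end Lens

theorem isConvexBody_closedBall_inter_closedBall {n : ℕ} {w : Evec n} {R : ℝ} (hw : ‖w‖ < R) :
    IsConvexBody (closedBall (-w) R ∩ closedBall w R) := by
  refine ⟨(isCompact_closedBall _ _).inter_right isClosed_closedBall,
    (convex_closedBall _ _).inter (convex_closedBall _ _),
    mem_interior_iff_mem_nhds.2 (Filter.inter_mem ?_ ?_)⟩ <;>
  exact closedBall_mem_nhds_of_mem (by simpa using hw)

theorem ball_inter_uniformly_convex_general {n : ℕ}
    (e : Evec n) (he : ‖e‖ = 1) (a : ℝ) (ha : 0 ≤ a)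
    (R : ℝ) (hR : R = Real.sqrt (1 + a ^ 2))
    (K : Set (Evec n)) (hK : K = closedBall (-(a • e)) R ∩ closedBall (a • e) R) :
    IsConvexBody K ∧ UnifConvexGauge K ((R - a) ^ 2) ∧
    ∀ x y : Evec n,
      gauge K ((2:ℝ)⁻¹ • (x + y)) ^ 2 ≤
        (gauge K x ^ 2 + gauge K y ^ 2) / 2 - ‖x - y‖ ^ 2 / 8 := by
  have hw : ‖a • e‖ = a := by rw [norm_smul, he, mul_one, Real.norm_of_nonneg ha]
  have hgauge : gauge K = lensSeminorm (a • e) := by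
    have h := gauge_closedBall_inter_closedBall (a • e)
    rwa [hw, ← hR, ← hK] at h
  have hmid := lensSeminorm_sq_midpoint_le (a • e)
  refine ⟨?_, fun x y => ?_, by simpa only [hgauge] using hmid⟩
  · rw [hK, hR]
    exact isConvexBody_closedBall_inter_closedBall
      (by rw [hw]; exact Real.lt_sqrt_of_sq_lt (by linarith))
  · rw [hgauge]
    refine two_mul_add_mul_le_of_midpoint_le (f := fun z => lensSeminorm (a • e) z ^ 2)
      hmid (fun y => ?_) x y
    simpa only [hw, hR] using sq_sub_mul_lensSeminorm_sq_le (a • e) y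

/-- The intersection of two balls `B(−ae, R) ∩ B(ae, R)` with `R = √(1+a²)` belongs to `𝔎`,
is `(R−a)²`-uniformly convex, and its squared gauge is strongly convex with modulus `1`. -/
theorem ball_inter_uniformly_convex {n : ℕ} (hn : 2 ≤ n)
    (e : Evec n) (he : ‖e‖ = 1) (a : ℝ) (ha : 0 ≤ a)
    (R : ℝ) (hR : R = Real.sqrt (1 + a ^ 2))
    (K : Set (Evec n)) (hK : K = closedBall (-(a • e)) R ∩ closedBall (a • e) R) :
    IsConvexBody K ∧ UnifConvexGauge K ((R - a) ^ 2) ∧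
    ∀ x y : Evec n,
      gauge K ((2:ℝ)⁻¹ • (x + y)) ^ 2 ≤
        (gauge K x ^ 2 + gauge K y ^ 2) / 2 - ‖x - y‖ ^ 2 / 8 :=
  ball_inter_uniformly_convex_general e he a ha R hR K hK
end
end

section
/- Let e ∈ ℝⁿ with |e| = 1, a ≥ 0, R = √(1 + a²), and K = B(−a·e, R) ∩ B(a·e, R). Then for every x ∈ ℝⁿ, the squared gauge of K satisfies the explicit formula j_K(x)² = 2a²(x·e)² + |x|² + 2a·|x·e|·√(a²(x·e)² + |x|²). -/
/-!
Scaling the two balls by `r > 0`, the condition `x ∈ r • K` becomes `‖x ± r a e‖ ≤ r R`; expanding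
the squares and using `R ^ 2 - a ^ 2 = 1`, both together say `‖x‖² + 2 a |⟪x, e⟫| r ≤ r²`. The set of
admissible `r` is therefore a ray starting at the positive root `a |⟪x, e⟫| + √(a² ⟪x, e⟫² + ‖x‖²)` of
this quadratic, and that root is the gauge; squaring it gives the formula.
-/

open MeasureTheory Metric Set
open scoped RealInnerProductSpace

noncomputable section

open scoped Pointwise

theorem gauge_eq_of_mem_smul_iff {E : Type*} [AddCommGroup E] [Module ℝ E] {s : Set E} {x : E}
    {r₀ : ℝ} (hr₀ : 0 ≤ r₀) (h : ∀ r, 0 < r → (x ∈ r • s ↔ r₀ ≤ r)) : gauge s x = r₀ := by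
  refine le_antisymm (le_of_forall_pos_le_add fun ε hε => ?_) ?_
  · exact gauge_le_of_mem (by positivity) ((h _ (by positivity)).2 (by linarith))
  · exact le_csInf ⟨r₀ + 1, by positivity, (h _ (by positivity)).2 (by linarith)⟩
      fun r hr => (h r hr.1).1 hr.2

theorem mem_closedBall_neg_inter_closedBall_iff {E : Type*} [NormedAddCommGroup E]
    [InnerProductSpace ℝ E] {c x : E} {ρ : ℝ} (hρ : 0 ≤ ρ) :
    x ∈ closedBall (-c) ρ ∩ closedBall c ρ ↔ ‖x‖ ^ 2 + 2 * |⟪x, c⟫| ≤ ρ ^ 2 - ‖c‖ ^ 2 := by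
  rw [mem_inter_iff, mem_closedBall, mem_closedBall, dist_eq_norm, dist_eq_norm, sub_neg_eq_add,
    ← sq_le_sq₀ (norm_nonneg _) hρ, ← sq_le_sq₀ (norm_nonneg _) hρ, norm_add_sq_real,
    norm_sub_sq_real]
  constructor
  · rintro ⟨h₁, h₂⟩
    rcases abs_cases ⟪x, c⟫ with ⟨h, -⟩ | ⟨h, -⟩ <;> linarith
  · intro h
    constructor <;> linarith [le_abs_self ⟪x, c⟫, neg_abs_le ⟪x, c⟫]

theorem add_two_mul_le_sq_iff_add_sqrt_le {b c r : ℝ} (hc : 0 ≤ c) (hr : 0 < r) :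
    c + 2 * b * r ≤ r ^ 2 ↔ b + √(b ^ 2 + c) ≤ r := by
  have hs : √(b ^ 2 + c) ^ 2 = b ^ 2 + c := Real.sq_sqrt (by positivity)
  have hbs : |b| ≤ √(b ^ 2 + c) := Real.abs_le_sqrt (by linarith)
  -- `r ^ 2 - 2 * b * r - c = (r - b - √(b ^ 2 + c)) * (r - b + √(b ^ 2 + c))`
  have hpos : 0 < r - b + √(b ^ 2 + c) := by linarith [le_abs_self b]
  constructor
  · intro h
    by_contra! hlt
    nlinarith [mul_pos (sub_pos.2 hlt) hpos]
  · intro h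
    nlinarith [mul_nonneg (sub_nonneg.2 h) hpos.le]

theorem mem_smul_closedBall_neg_inter_closedBall_iff {E : Type*} [NormedAddCommGroup E]
    [InnerProductSpace ℝ E] {e x : E} (he : ‖e‖ = 1) {a r : ℝ} (ha : 0 ≤ a) (hr : 0 < r) :
    x ∈ r • (closedBall (-(a • e)) √(1 + a ^ 2) ∩ closedBall (a • e) √(1 + a ^ 2)) ↔
      ‖x‖ ^ 2 + 2 * (a * |⟪x, e⟫|) * r ≤ r ^ 2 := by
  rw [smul_set_inter₀ hr.ne', _root_.smul_closedBall _ _ (by positivity),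
    _root_.smul_closedBall _ _ (by positivity), smul_neg,
    mem_closedBall_neg_inter_closedBall_iff (by positivity), mul_pow,
    Real.sq_sqrt (by positivity), norm_smul, norm_smul, he, real_inner_smul_right,
    real_inner_smul_right, abs_mul, abs_mul, Real.norm_eq_abs, Real.norm_eq_abs, abs_of_pos hr,
    abs_of_nonneg ha]
  constructor <;> intro h <;> nlinarith

theorem gauge_sq_ball_inter_formula_general {n : ℕ}
    (e : Evec n) (he : ‖e‖ = 1) (a : ℝ) (ha : 0 ≤ a)
    (R : ℝ) (hR : R = Real.sqrt (1 + a ^ 2))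
    (K : Set (Evec n)) (hK : K = closedBall (-(a • e)) R ∩ closedBall (a • e) R) :
    ∀ x : Evec n,
      gauge K x ^ 2 =
        2 * a ^ 2 * ⟪x, e⟫ ^ 2 + ‖x‖ ^ 2 +
          2 * a * |⟪x, e⟫| * Real.sqrt (a ^ 2 * ⟪x, e⟫ ^ 2 + ‖x‖ ^ 2) := by
  intro x
  have hmem (r : ℝ) (hr : 0 < r) :
      x ∈ r • K ↔ a * |⟪x, e⟫| + √((a * |⟪x, e⟫|) ^ 2 + ‖x‖ ^ 2) ≤ r := by
    rw [hK, hR, mem_smul_closedBall_neg_inter_closedBall_iff he ha hr,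
      add_two_mul_le_sq_iff_add_sqrt_le (by positivity) hr]
  rw [gauge_eq_of_mem_smul_iff (by positivity) hmem, add_sq, Real.sq_sqrt (by positivity),
    mul_pow, sq_abs]
  ring

/-- Explicit formula for the squared gauge of `B(−ae, R) ∩ B(ae, R)` with `R = √(1+a²)`.
Here `⟪x, e⟫` denotes the real inner product `x·e`. -/
theorem gauge_sq_ball_inter_formula {n : ℕ} (hn : 2 ≤ n)
    (e : Evec n) (he : ‖e‖ = 1) (a : ℝ) (ha : 0 ≤ a)
    (R : ℝ) (hR : R = Real.sqrt (1 + a ^ 2))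
    (K : Set (Evec n)) (hK : K = closedBall (-(a • e)) R ∩ closedBall (a • e) R) :
    ∀ x : Evec n,
      gauge K x ^ 2 =
        2 * a ^ 2 * ⟪x, e⟫ ^ 2 + ‖x‖ ^ 2 +
          2 * a * |⟪x, e⟫| * Real.sqrt (a ^ 2 * ⟪x, e⟫ ^ 2 + ‖x‖ ^ 2) :=
  gauge_sq_ball_inter_formula_general e he a ha R hR K hK
end
end

section
/- Let e ∈ ℝⁿ with |e| = 1, a ≥ 0, R = √(1 + a²), and K = B(−a·e, R) ∩ B(a·e, R). Then the function x ↦ j_K(x)² − |x|²/2 is convex on ℝⁿ (equivalently, the distributional Hessian of j_K² is bounded below by the identity matrix). -/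
/-!
Write `t = ⟪x, e⟫` and `N x = √(a² t² + ‖x‖²)`, the norm stretched along `e`, with inner product
`B`. The lens is `{z | ‖z‖² + 2a|⟪z, e⟫| ≤ 1}`, and solving a quadratic in the scaling factor gives
`j_K x = a|t| + N x`, so `j_K² - ‖·‖²/2 = 2a²t² + ‖x‖²/2 + 2a|t| N x`. At every point `m` this is
touched from below (Cauchy–Schwarz for `B`) by the quadratic form `x ↦ 2a²t² + ‖x‖²/2 + 2at B(w, x)`
with `w = ±m / N m` and the sign chosen so that `⟪w, e⟫ ≥ 0`. Since also `‖w‖ ≤ 1`, that form is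
at least `(‖v‖ - 2a|⟪v, e⟫|)² / 2 ≥ 0`, hence convex; a function touched from below at every point
by convex functions is convex.
-/

open MeasureTheory Metric Set

noncomputable section

open scoped RealInnerProductSpace Pointwise

theorem ConvexOn.of_forall_exists_minorant {E : Type*} [AddCommMonoid E] [Module ℝ E]
    {s : Set E} {f : E → ℝ} (hs : Convex ℝ s)
    (h : ∀ m ∈ s, ∃ g : E → ℝ, ConvexOn ℝ s g ∧ (∀ x ∈ s, g x ≤ f x) ∧ g m = f m) :
    ConvexOn ℝ s f := by
  refine ⟨hs, fun x hx y hy μ ν hμ hν hμν => ?_⟩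
  obtain ⟨g, hg, hgf, hgm⟩ := h _ (hs hx hy hμ hν hμν)
  rw [← hgm]
  exact (hg.2 hx hy hμ hν hμν).trans <| add_le_add
    (mul_le_mul_of_nonneg_left (hgf x hx) hμ) (mul_le_mul_of_nonneg_left (hgf y hy) hν)

theorem LinearMap.BilinForm.convexOn_apply_self {E : Type*} [AddCommGroup E] [Module ℝ E]
    {B : LinearMap.BilinForm ℝ E} (hB : ∀ v, 0 ≤ B v v) : ConvexOn ℝ univ fun x => B x x := by
  refine ⟨convex_univ, fun x _ y _ μ ν hμ hν hμν => ?_⟩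
  have key : B (μ • x + ν • y) (μ • x + ν • y) + μ * ν * B (x - y) (x - y)
      = μ * B x x + ν * B y y := by
    simp only [map_add, map_sub, map_smul, LinearMap.add_apply, LinearMap.sub_apply,
      LinearMap.smul_apply, smul_eq_mul]
    linear_combination (μ * B x x + ν * B y y) * hμν
  simp only [smul_eq_mul]
  linarith [mul_nonneg (mul_nonneg hμ hν) (hB (x - y))]

theorem gauge_eq_of_forall_mem_smul_iff {E : Type*} [AddCommGroup E] [Module ℝ E]
    {s : Set E} {x : E} {φ : ℝ} (hφ : 0 ≤ φ) (h : ∀ r, 0 < r → (x ∈ r • s ↔ φ ≤ r)) :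
    gauge s x = φ := by
  have hset : {r ∈ Ioi (0 : ℝ) | x ∈ r • s} = Ioi 0 ∩ Ici φ := by
    ext r
    exact and_congr_right (h r)
  rw [gauge_def, hset]
  rcases hφ.eq_or_lt with rfl | hφ
  · rw [inter_eq_left.2 Ioi_subset_Ici_self, csInf_Ioi]
  · rw [inter_eq_right.2 (Ici_subset_Ioi.2 hφ), csInf_Ici]

theorem add_sqrt_sq_add_le_iff {b q r : ℝ} (hq : 0 ≤ q) (hr : 0 < r) :
    b + √(b ^ 2 + q) ≤ r ↔ q + 2 * b * r ≤ r ^ 2 := by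
  rw [← le_sub_iff_add_le', Real.sqrt_le_iff]
  constructor
  · rintro ⟨-, h⟩
    nlinarith
  · intro h
    constructor <;> nlinarith

section

variable {E : Type*} [NormedAddCommGroup E] [InnerProductSpace ℝ E]

theorem sq_mul_add_inner_le (α β : ℝ) (u v : E) :
    (α * β + ⟪u, v⟫) ^ 2 ≤ (α ^ 2 + ‖u‖ ^ 2) * (β ^ 2 + ‖v‖ ^ 2) := by
  have h : |α * β + ⟪u, v⟫| ≤ |α| * |β| + ‖u‖ * ‖v‖ :=
    (abs_add_le _ _).trans (by rw [abs_mul]; gcongr; exact abs_real_inner_le_norm u v)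
  calc (α * β + ⟪u, v⟫) ^ 2 ≤ (|α| * |β| + ‖u‖ * ‖v‖) ^ 2 := sq_le_sq' (abs_le.1 h).1 (abs_le.1 h).2
    _ ≤ (α ^ 2 + ‖u‖ ^ 2) * (β ^ 2 + ‖v‖ ^ 2) := by
      nlinarith [sq_nonneg (|α| * ‖v‖ - |β| * ‖u‖), sq_abs α, sq_abs β]

variable (a : ℝ) (e : E)

def lens : Set E := {z | ‖z‖ ^ 2 + 2 * a * |⟪z, e⟫| ≤ 1}

def stretchInner (x y : E) : ℝ := a ^ 2 * ⟪x, e⟫ * ⟪y, e⟫ + ⟪x, y⟫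

def stretchNorm (x : E) : ℝ := √(a ^ 2 * ⟪x, e⟫ ^ 2 + ‖x‖ ^ 2)

variable {a e}

theorem mem_lens {z : E} : z ∈ lens a e ↔ ‖z‖ ^ 2 + 2 * a * |⟪z, e⟫| ≤ 1 := Iff.rfl

theorem closedBall_inter_closedBall_eq_lens (he : ‖e‖ = 1) (ha : 0 ≤ a) :
    closedBall (-(a • e)) √(1 + a ^ 2) ∩ closedBall (a • e) √(1 + a ^ 2) = lens a e := by
  have hsq (y : E) : ‖y‖ ≤ √(1 + a ^ 2) ↔ ‖y‖ ^ 2 ≤ 1 + a ^ 2 :=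
    Real.le_sqrt (norm_nonneg y) (by positivity)
  have hnorm (z : E) (c : ℝ) : ‖z + c • e‖ ^ 2 = ‖z‖ ^ 2 + 2 * c * ⟪z, e⟫ + c ^ 2 := by
    rw [norm_add_sq_real, real_inner_smul_right, norm_smul, he, Real.norm_eq_abs, mul_one, sq_abs]
    ring
  ext z
  have habs : 2 * a * |⟪z, e⟫| = |2 * a * ⟪z, e⟫| := by
    rw [abs_mul, abs_of_nonneg (by positivity : 0 ≤ 2 * a)]
  simp only [mem_lens, mem_inter_iff, mem_closedBall, dist_eq_norm, sub_eq_add_neg, ← neg_smul,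
    hsq, hnorm, habs, ← le_sub_iff_add_le', abs_le]
  constructor <;> rintro ⟨h₁, h₂⟩ <;> constructor <;> linarith

theorem stretchNorm_nonneg (x : E) : 0 ≤ stretchNorm a e x := Real.sqrt_nonneg _

theorem stretchNorm_sq (x : E) : stretchNorm a e x ^ 2 = a ^ 2 * ⟪x, e⟫ ^ 2 + ‖x‖ ^ 2 :=
  Real.sq_sqrt (by positivity)

theorem norm_le_stretchNorm (x : E) : ‖x‖ ≤ stretchNorm a e x :=
  Real.le_sqrt_of_sq_le (by nlinarith [sq_nonneg (a * ⟪x, e⟫)])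

theorem stretchNorm_smul (r : ℝ) (x : E) : stretchNorm a e (r • x) = |r| * stretchNorm a e x := by
  rw [stretchNorm, stretchNorm, ← Real.sqrt_sq_eq_abs, ← Real.sqrt_mul (sq_nonneg r),
    real_inner_smul_left, norm_smul, Real.norm_eq_abs, mul_pow, mul_pow, sq_abs]
  ring_nf

theorem stretchInner_self (x : E) : stretchInner a e x x = stretchNorm a e x ^ 2 := by
  rw [stretchNorm_sq, stretchInner, real_inner_self_eq_norm_sq]
  ring

theorem stretchInner_smul_left (r : ℝ) (x y : E) :
    stretchInner a e (r • x) y = r * stretchInner a e x y := by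
  simp only [stretchInner, real_inner_smul_left]
  ring

theorem abs_stretchInner_le (x y : E) :
    |stretchInner a e x y| ≤ stretchNorm a e x * stretchNorm a e y := by
  rw [stretchNorm, stretchNorm, ← Real.sqrt_mul (by positivity)]
  apply Real.abs_le_sqrt
  have := sq_mul_add_inner_le (a * ⟪x, e⟫) (a * ⟪y, e⟫) x y
  rw [stretchInner]
  linear_combination this

theorem mem_smul_lens_iff {r : ℝ} (hr : 0 < r) (x : E) :
    x ∈ r • lens a e ↔ a * |⟪x, e⟫| + stretchNorm a e x ≤ r := by
  have hsq : a ^ 2 * ⟪x, e⟫ ^ 2 = (a * |⟪x, e⟫|) ^ 2 := by rw [mul_pow, sq_abs]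
  rw [stretchNorm, hsq, add_sqrt_sq_add_le_iff (by positivity) hr,
    mem_smul_set_iff_inv_smul_mem₀ hr.ne', mem_lens, norm_smul, real_inner_smul_left,
    abs_mul, Real.norm_eq_abs, abs_of_pos (inv_pos.2 hr),
    ← mul_le_mul_iff_of_pos_left (pow_pos hr 2)]
  field_simp

theorem gauge_lens (x : E) : gauge (lens a e) x = a * |⟪x, e⟫| + stretchNorm a e x := by
  have hφ : -(a * |⟪x, e⟫|) ≤ stretchNorm a e x :=
    (neg_le_abs _).trans (Real.abs_le_sqrt (by nlinarith [sq_abs ⟪x, e⟫, sq_nonneg ‖x‖]))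
  exact gauge_eq_of_forall_mem_smul_iff (by linarith) fun _ hr => mem_smul_lens_iff hr x

theorem gauge_lens_sq_sub (x : E) :
    gauge (lens a e) x ^ 2 - ‖x‖ ^ 2 / 2
      = 2 * a ^ 2 * ⟪x, e⟫ ^ 2 + ‖x‖ ^ 2 / 2 + 2 * a * |⟪x, e⟫| * stretchNorm a e x := by
  rw [gauge_lens]
  linear_combination stretchNorm_sq (a := a) (e := e) x + a ^ 2 * sq_abs ⟪x, e⟫

variable (a e) in
def lensForm (w : E) : LinearMap.BilinForm ℝ E :=
  LinearMap.mk₂ ℝ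
    (fun x y => 2 * a ^ 2 * ⟪x, e⟫ * ⟪y, e⟫ + ⟪x, y⟫ / 2 + 2 * a * ⟪x, e⟫ * stretchInner a e w y)
    (fun _ _ _ => by simp only [inner_add_left]; ring)
    (fun _ _ _ => by simp only [real_inner_smul_left, smul_eq_mul]; ring)
    (fun _ _ _ => by simp only [stretchInner, inner_add_left, inner_add_right]; ring)
    (fun _ _ _ => by
      simp only [stretchInner, real_inner_smul_left, real_inner_smul_right, smul_eq_mul]; ring)

theorem lensForm_apply (w x y : E) : lensForm a e w x y
    = 2 * a ^ 2 * ⟪x, e⟫ * ⟪y, e⟫ + ⟪x, y⟫ / 2 + 2 * a * ⟪x, e⟫ * stretchInner a e w y := rfl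

theorem lensForm_self_nonneg (ha : 0 ≤ a) {w : E} (hwe : 0 ≤ ⟪w, e⟫) (hw : ‖w‖ ≤ 1) (v : E) :
    0 ≤ lensForm a e w v v := by
  have hwv : |⟪v, e⟫ * ⟪w, v⟫| ≤ |⟪v, e⟫| * ‖v‖ := by
    rw [abs_mul]
    gcongr
    exact (abs_real_inner_le_norm w v).trans (mul_le_of_le_one_left (norm_nonneg v) hw)
  rw [lensForm_apply, stretchInner, real_inner_self_eq_norm_sq]
  nlinarith [sq_nonneg (‖v‖ - 2 * a * |⟪v, e⟫|), sq_abs ⟪v, e⟫, neg_abs_le (⟪v, e⟫ * ⟪w, v⟫),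
    mul_nonneg (mul_nonneg (pow_nonneg ha 3) hwe) (sq_nonneg ⟪v, e⟫)]

theorem lensForm_self_le (ha : 0 ≤ a) {w : E} (hw : stretchNorm a e w ≤ 1) (x : E) :
    lensForm a e w x x ≤ gauge (lens a e) x ^ 2 - ‖x‖ ^ 2 / 2 := by
  have h : ⟪x, e⟫ * stretchInner a e w x ≤ |⟪x, e⟫| * stretchNorm a e x :=
    calc ⟪x, e⟫ * stretchInner a e w x ≤ |⟪x, e⟫| * |stretchInner a e w x| := by
          rw [← abs_mul]; exact le_abs_self _
      _ ≤ |⟪x, e⟫| * stretchNorm a e x := by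
          gcongr
          exact (abs_stretchInner_le w x).trans
            (mul_le_of_le_one_left (stretchNorm_nonneg x) hw)
  rw [gauge_lens_sq_sub, lensForm_apply, real_inner_self_eq_norm_sq]
  nlinarith [mul_le_mul_of_nonneg_left h ha]

theorem exists_lensForm_self_eq (m : E) :
    ∃ w : E, 0 ≤ ⟪w, e⟫ ∧ stretchNorm a e w ≤ 1 ∧
      lensForm a e w m m = gauge (lens a e) m ^ 2 - ‖m‖ ^ 2 / 2 := by
  set t := ⟪m, e⟫
  set N := stretchNorm a e m
  set c : ℝ := ((SignType.sign t : SignType) : ℝ)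
  have hct : c * t = |t| := sign_mul_self t
  have hc : |c| ≤ 1 := by rcases lt_trichotomy t 0 with h | h | h <;> simp [c, h]
  have hN : 0 ≤ N := stretchNorm_nonneg m
  refine ⟨(c / N) • m, ?_, ?_, ?_⟩
  · rw [real_inner_smul_left, div_mul_eq_mul_div, hct]
    positivity
  · rw [stretchNorm_smul, abs_div, abs_of_nonneg hN, div_mul_eq_mul_div, mul_div_assoc]
    exact mul_le_one₀ hc (div_nonneg hN hN) (div_self_le_one N)
  · have hcN : c / N * N ^ 2 = c * N := by
      rcases eq_or_ne N 0 with h | h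
      · simp [h]
      · field_simp
    rw [gauge_lens_sq_sub, lensForm_apply, stretchInner_smul_left, stretchInner_self,
      real_inner_self_eq_norm_sq, hcN]
    linear_combination 2 * a * N * hct

theorem convexOn_gauge_lens_sq_sub (ha : 0 ≤ a) :
    ConvexOn ℝ univ fun x : E => gauge (lens a e) x ^ 2 - ‖x‖ ^ 2 / 2 := by
  refine ConvexOn.of_forall_exists_minorant convex_univ fun m _ => ?_
  obtain ⟨w, hwe, hw, hwm⟩ := exists_lensForm_self_eq m
  exact ⟨fun x => lensForm a e w x x,
    LinearMap.BilinForm.convexOn_apply_self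
      (lensForm_self_nonneg ha hwe ((norm_le_stretchNorm w).trans hw)),
    fun x _ => lensForm_self_le ha hw x, hwm⟩

end

theorem gauge_sq_strongly_convex_general {n : ℕ}
    (e : Evec n) (he : ‖e‖ = 1) (a : ℝ) (ha : 0 ≤ a)
    (R : ℝ) (hR : R = Real.sqrt (1 + a ^ 2))
    (K : Set (Evec n)) (hK : K = closedBall (-(a • e)) R ∩ closedBall (a • e) R) :
    ConvexOn ℝ Set.univ (fun x : Evec n => gauge K x ^ 2 - ‖x‖ ^ 2 / 2) := by
  rw [hK, hR, closedBall_inter_closedBall_eq_lens he ha]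
  exact convexOn_gauge_lens_sq_sub ha

/-- The squared gauge of `B(−ae, R) ∩ B(ae, R)` with `R = √(1+a²)` is `1`-strongly convex:
`x ↦ j_K(x)² − |x|²/2` is convex on `ℝⁿ`. -/
theorem gauge_sq_strongly_convex {n : ℕ} (hn : 2 ≤ n)
    (e : Evec n) (he : ‖e‖ = 1) (a : ℝ) (ha : 0 ≤ a)
    (R : ℝ) (hR : R = Real.sqrt (1 + a ^ 2))
    (K : Set (Evec n)) (hK : K = closedBall (-(a • e)) R ∩ closedBall (a • e) R) :
    ConvexOn ℝ Set.univ (fun x : Evec n => gauge K x ^ 2 - ‖x‖ ^ 2 / 2) :=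
  gauge_sq_strongly_convex_general e he a ha R hR K hK
end
end

section
/- Let n ≥ 2. For every v ∈ ℝⁿ and every M ∈ 𝒮ⁿ₀ there exists q ∈ ℝ and a pair (c,ξ) ∈ ℝ×ℝⁿ with (c,ξ) ≠ (0,0) such that c·v + (M + q·Iₙ)·ξ = 0 and v·ξ = 0; equivalently, there exists q ∈ ℝ such that the determinant of the (n+1)×(n+1) block matrix with first column (v,0), upper-right block M + q·Iₙ and bottom-right row vᵀ vanishes, i.e. (v,M,q) belongs to the wave cone Λ of the linear subsolution system. -/
/-!
Write `K = v^⊥`, which is nonzero because `n ≥ 2`. The two conditions ask for `ξ ∈ K`, `ξ ≠ 0`,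
with `(M + q Iₙ) ξ ∈ (K^⊥) = ℝ v`, i.e. for an eigenvector of the compression `P_K M P_K` of `M`
to `K`, with eigenvalue `-q`; then `c` is minus the coefficient of `v`. Since `M` is symmetric,
so is its compression, and the spectral theorem provides such an eigenvector.
-/

open MeasureTheory Metric Set
open scoped RealInnerProductSpace

noncomputable section

open scoped InnerProductSpace

theorem Submodule.orthogonal_span_singleton_ne_bot {𝕜 E : Type*} [RCLike 𝕜]
    [NormedAddCommGroup E] [InnerProductSpace 𝕜 E] [FiniteDimensional 𝕜 E]
    (hE : 2 ≤ Module.finrank 𝕜 E) (v : E) : (𝕜 ∙ v)ᗮ ≠ ⊥ := by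
  intro h
  have hsum := (𝕜 ∙ v).finrank_add_finrank_orthogonal
  have hv : Module.finrank 𝕜 (𝕜 ∙ v) ≤ 1 := by simpa using finrank_span_le_card ({v} : Set E)
  rw [h, finrank_bot] at hsum
  omega

namespace LinearMap.IsSymmetric

variable {𝕜 E : Type*} [RCLike 𝕜] [NormedAddCommGroup E] [InnerProductSpace 𝕜 E]
  [FiniteDimensional 𝕜 E] {T : E →ₗ[𝕜] E}

theorem exists_ne_zero_sub_smul_mem_orthogonal (hT : T.IsSymmetric) {K : Submodule 𝕜 E}
    (hK : K ≠ ⊥) : ∃ ξ ∈ K, ξ ≠ 0 ∧ ∃ μ : 𝕜, T ξ - μ • ξ ∈ Kᗮ := by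
  have : Nontrivial K := Submodule.nontrivial_iff_ne_bot.mpr hK
  obtain ⟨μ, hμ⟩ : ∃ μ, Module.End.HasEigenvalue (K.subtype.adjoint ∘ₗ T ∘ₗ K.subtype) μ :=
    ⟨_, (hT.adjoint_conj K.subtype).hasEigenvalue_iSup_of_finiteDimensional⟩
  obtain ⟨ξ, hξ⟩ := hμ.exists_hasEigenvector
  refine ⟨ξ, ξ.2, by simpa using hξ.2, μ, fun y hy => ?_⟩
  calc ⟪y, T ξ - μ • ξ⟫_𝕜
      = ⟪(⟨y, hy⟩ : K), (K.subtype.adjoint ∘ₗ T ∘ₗ K.subtype) ξ - μ • ξ⟫_𝕜 := by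
        simp [inner_sub_right, inner_smul_right, LinearMap.adjoint_inner_right]
    _ = 0 := by rw [hξ.apply_eq_smul, sub_self, inner_zero_right]

theorem exists_orthogonal_sub_smul_eq_smul (hT : T.IsSymmetric) (hE : 2 ≤ Module.finrank 𝕜 E)
    (v : E) : ∃ ξ : E, ξ ≠ 0 ∧ ⟪v, ξ⟫_𝕜 = 0 ∧ ∃ μ a : 𝕜, T ξ - μ • ξ = a • v := by
  obtain ⟨ξ, hξv, hξ, μ, hμ⟩ :=
    hT.exists_ne_zero_sub_smul_mem_orthogonal (Submodule.orthogonal_span_singleton_ne_bot hE v)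
  rw [Submodule.orthogonal_orthogonal, Submodule.mem_span_singleton] at hμ
  obtain ⟨a, ha⟩ := hμ
  exact ⟨ξ, hξ, Submodule.mem_orthogonal_singleton_iff_inner_right.mp hξv, μ, a, ha.symm⟩

end LinearMap.IsSymmetric

theorem wave_cone_surjective_general {n : ℕ} (hn : 2 ≤ n)
    (v : Evec n) (M : Matrix (Fin n) (Fin n) ℝ) (hMs : M.IsSymm) :
    ∃ (q : ℝ) (c : ℝ) (ξ : Evec n), ¬(c = 0 ∧ ξ = 0) ∧
      (∀ i, c * v i + ∑ j, (M + q • (1 : Matrix (Fin n) (Fin n) ℝ)) i j * ξ j = 0) ∧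
      ⟪v, ξ⟫ = 0 := by
  have hT : M.toEuclideanLin.IsSymmetric :=
    Matrix.isSymmetric_toEuclideanLin_iff.mpr (Matrix.isHermitian_iff_isSymm.mpr hMs)
  obtain ⟨ξ, hξ, hvξ, μ, a, h⟩ := hT.exists_orthogonal_sub_smul_eq_smul (by simpa using hn) v
  refine ⟨-μ, -a, ξ, fun h0 => hξ h0.2, fun i => ?_, hvξ⟩
  have hi : ∑ j, M i j * ξ j - μ * ξ i = a * v i := by
    simpa [Matrix.toEuclideanLin, Matrix.mulVec, dotProduct] using congrArg (· i) h
  simp [add_mul, Finset.sum_add_distrib, Matrix.one_apply]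
  linarith

/-- For every `v ∈ ℝⁿ` and every trace-free symmetric `M`, there is a `q` putting
`(v, M, q)` in the wave cone `Λ` of the linear subsolution system: there exists
`(c, ξ) ≠ (0, 0)` with `c·v + (M + q·Iₙ)·ξ = 0` and `v·ξ = 0`. -/
theorem wave_cone_surjective {n : ℕ} (hn : 2 ≤ n)
    (v : Evec n) (M : Matrix (Fin n) (Fin n) ℝ) (hMs : M.IsSymm) (hMt : M.trace = 0) :
    ∃ (q : ℝ) (c : ℝ) (ξ : Evec n), ¬(c = 0 ∧ ξ = 0) ∧
      (∀ i, c * v i + ∑ j, (M + q • (1 : Matrix (Fin n) (Fin n) ℝ)) i j * ξ j = 0) ∧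
      ⟪v, ξ⟫ = 0 :=
  wave_cone_surjective_general hn v M hMs

end
end

section
/- Let n ≥ 2 and let a, b ∈ ℝⁿ with a ≠ b. Set q = (|b|² − |a|²)/n and λ = (b−a, F(b)−F(a), q) ∈ ℝⁿ×𝒮ⁿ₀×ℝ. Then λ ≠ 0 and λ belongs to the wave cone Λ: there exists (c,ξ) ∈ ℝ×ℝⁿ with (c,ξ) ≠ (0,0) such that c·(b−a) + (F(b)−F(a) + q·Iₙ)·ξ = 0 and (b−a)·ξ = 0. -/
open MeasureTheory Metric Set
open scoped RealInnerProductSpace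

noncomputable section

/-- `F(u) = u ⊗ u - (|u|²/n) Iₙ`. -/
def Fmat {n : ℕ} (u : Evec n) : Matrix (Fin n) (Fin n) ℝ :=
  Matrix.of fun i j => u i * u j - if i = j then ‖u‖ ^ 2 / n else 0

/-! The shift `q = (|b|² - |a|²)/n` cancels the trace-free correction of `F(b) - F(a)`, leaving
the rank-two matrix `b ⊗ b - a ⊗ a`. Any `ξ ≠ 0` orthogonal to `b - a` (it exists since `n ≥ 2`)
has `⟨a, ξ⟩ = ⟨b, ξ⟩`, so this matrix maps `ξ` to `⟨a, ξ⟩ (b - a)`, which `c = -⟨a, ξ⟩`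
compensates. -/

theorem exists_ne_zero_inner_eq_zero {E : Type*} [NormedAddCommGroup E] [InnerProductSpace ℝ E]
    [FiniteDimensional ℝ E] (hE : 2 ≤ Module.finrank ℝ E) (v : E) : ∃ x ≠ 0, ⟪v, x⟫ = 0 := by
  have hspan : Module.finrank ℝ (ℝ ∙ v) ≤ 1 :=
    (finrank_span_le_card ({v} : Set E)).trans (by simp)
  have hsum := (ℝ ∙ v).finrank_add_finrank_orthogonal
  obtain ⟨x, hx, hx0⟩ := Submodule.exists_mem_ne_zero_of_ne_bot
    (Submodule.one_le_finrank_iff.mp (by omega) : (ℝ ∙ v)ᗮ ≠ ⊥)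
  exact ⟨x, hx0, Submodule.mem_orthogonal_singleton_iff_inner_right.mp hx⟩

theorem Fmat_sub_Fmat_add_smul_one_apply {n : ℕ} (a b : Evec n) (i j : Fin n) :
    (Fmat b - Fmat a + ((‖b‖ ^ 2 - ‖a‖ ^ 2) / n) • (1 : Matrix (Fin n) (Fin n) ℝ)) i j =
      b i * b j - a i * a j := by
  by_cases h : i = j <;> simp [Fmat, h]; ring

theorem EuclideanSpace.inner_eq_sum_mul {ι : Type*} [Fintype ι] (u ξ : EuclideanSpace ℝ ι) :
    ⟪u, ξ⟫ = ∑ j, u j * ξ j := by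
  simp [PiLp.inner_apply, mul_comm]

theorem sum_sub_mul_mul_eq_inner_mul_sub {ι : Type*} [Fintype ι] (a b ξ : EuclideanSpace ℝ ι)
    (hξ : ⟪b - a, ξ⟫ = 0) (i : ι) : ∑ j, (b i * b j - a i * a j) * ξ j = ⟪a, ξ⟫ * (b - a) i := by
  have hab : ⟪b, ξ⟫ = ⟪a, ξ⟫ := by rwa [inner_sub_left, sub_eq_zero] at hξ
  calc ∑ j, (b i * b j - a i * a j) * ξ j = b i * ⟪b, ξ⟫ - a i * ⟪a, ξ⟫ := by
        simp only [EuclideanSpace.inner_eq_sum_mul, Finset.mul_sum, ← Finset.sum_sub_distrib]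
        exact Finset.sum_congr rfl fun j _ => by ring
    _ = ⟪a, ξ⟫ * (b - a) i := by rw [hab, PiLp.sub_apply]; ring

/-- For `a ≠ b`, the triple `λ = (b−a, F(b)−F(a), (|b|²−|a|²)/n)` is a nonzero element of
the wave cone `Λ`. -/
theorem difference_in_wave_cone {n : ℕ} (hn : 2 ≤ n)
    (a b : Evec n) (hab : a ≠ b) (q : ℝ) (hq : q = (‖b‖ ^ 2 - ‖a‖ ^ 2) / n) :
    ((b - a, Fmat b - Fmat a, q) : Evec n × Matrix (Fin n) (Fin n) ℝ × ℝ) ≠ 0 ∧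
    ∃ (c : ℝ) (ξ : Evec n), ¬(c = 0 ∧ ξ = 0) ∧
      (∀ i, c * (b - a) i +
        ∑ j, (Fmat b - Fmat a + q • (1 : Matrix (Fin n) (Fin n) ℝ)) i j * ξ j = 0) ∧
      ⟪b - a, ξ⟫ = 0 := by
  have hba : b - a ≠ 0 := sub_ne_zero.mpr hab.symm
  refine ⟨fun h => hba (congrArg Prod.fst h), ?_⟩
  obtain ⟨ξ, hξ0, hξ⟩ := exists_ne_zero_inner_eq_zero (by simpa using hn) (b - a)
  refine ⟨-⟪a, ξ⟫, ξ, fun h => hξ0 h.2, fun i => ?_, hξ⟩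
  simp only [hq, Fmat_sub_Fmat_add_smul_one_apply, sum_sub_mul_mul_eq_inner_mul_sub a b ξ hξ]
  ring
end
end
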